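/- arXiv:0910.3082 — 4 statements merged into one kernel-verified Lean document; each statement's English description precedes it below -/
import Mathlib

section
/- The union of two ST-sets S and T with respect to a cluster set C that have nonempty intersection is again an ST-set with respect to C, provided S \cup T \neq X. Consequently, distinct maximal ST-sets with S \cup T \neq X are disjoint. -/
def FCompatible {α : Type} [DecidableEq α] (A B : Finset α) : Prop :=
  A ∩ B = ∅ ∨ A ⊆ B ∨ B ⊆ A

def FIncompatible {α : Type} [DecidableEq α] (A B : Finset α) : Prop :=
  (A ∩ B).Nonempty ∧ (A \ B).Nonempty ∧ (B \ A).Nonempty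

/-- `S` is separated by `C` if some cluster of `C` is incompatible with `S`. -/
def FSeparated {α : Type} [DecidableEq α] (C : Finset (Finset α)) (S : Finset α) : Prop :=
  ∃ C0 ∈ C, FIncompatible C0 S

/-- the restriction `C|S` : nonempty intersections of clusters of `C` with `S` -/
def FRestrict {α : Type} [DecidableEq α] (C : Finset (Finset α)) (S : Finset α) :
    Finset (Finset α) :=
  (C.image (fun C0 => C0 ∩ S)).filter (fun A => A.Nonempty)

/-- `S` is an ST-set w.r.t. `C` (taxon set `X`): a proper subset of `X` that is not
separated by `C` and such that the clusters of `C|S` are pairwise compatible. -/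
def FSTSet {α : Type} [DecidableEq α] (X : Finset α) (C : Finset (Finset α))
    (S : Finset α) : Prop :=
  S ⊂ X ∧ ¬ FSeparated C S ∧
    ∀ A ∈ FRestrict C S, ∀ B ∈ FRestrict C S, FCompatible A B

/-- `S` is a maximal ST-set: an ST-set not properly contained in any other ST-set. -/
def FMaxSTSet {α : Type} [DecidableEq α] (X : Finset α) (C : Finset (Finset α))
    (S : Finset α) : Prop :=
  FSTSet X C S ∧ ∀ T, FSTSet X C T → S ⊆ T → S = T

lemma compat_of_not_incompat {α : Type} [DecidableEq α] {A B : Finset α}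
    (h : ¬ FIncompatible A B) : FCompatible A B := by
  unfold FIncompatible at h
  push_neg at h
  by_cases h1 : (A ∩ B).Nonempty
  · by_cases h2 : (A \ B).Nonempty
    · right; right
      have := h h1 h2
      rwa [Finset.sdiff_eq_empty_iff_subset] at this
    · right; left
      rwa [Finset.not_nonempty_iff_eq_empty, Finset.sdiff_eq_empty_iff_subset] at h2
  · left; rwa [Finset.not_nonempty_iff_eq_empty] at h1

lemma not_incompat_of_compat {α : Type} [DecidableEq α] {A B : Finset α}
    (h : FCompatible A B) : ¬ FIncompatible A B := by
  rintro ⟨h1, h2, h3⟩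
  rcases h with h | h | h
  · rw [h] at h1; exact absurd h1 (by simp)
  · rw [Finset.sdiff_eq_empty_iff_subset.mpr h] at h2; exact absurd h2 (by simp)
  · rw [Finset.sdiff_eq_empty_iff_subset.mpr h] at h3; exact absurd h3 (by simp)

lemma classify_compat {α : Type} [DecidableEq α] {C0 S T : Finset α}
    (hS : FCompatible C0 S) (hT : FCompatible C0 T) (hST : (S ∩ T).Nonempty) :
    C0 ∩ (S ∪ T) = ∅ ∨ C0 ⊆ S ∨ C0 ⊆ T ∨ S ∪ T ⊆ C0 := by
  obtain ⟨x, hx⟩ := hST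
  rw [Finset.mem_inter] at hx
  rcases hS with h1 | h1 | h1
  · rcases hT with h2 | h2 | h2
    · left; rw [Finset.inter_union_distrib_left, h1, h2, Finset.empty_union]
    · right; right; left; exact h2
    · exfalso
      have : x ∈ C0 ∩ S := Finset.mem_inter.mpr ⟨h2 hx.2, hx.1⟩
      rw [h1] at this; exact absurd this (by simp)
  · right; left; exact h1
  · rcases hT with h2 | h2 | h2
    · exfalso
      have : x ∈ C0 ∩ T := Finset.mem_inter.mpr ⟨h1 hx.1, hx.2⟩
      rw [h2] at this; exact absurd this (by simp)
    · right; right; left; exact h2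
    · right; right; right; exact Finset.union_subset h1 h2

lemma mem_restrict_of_subset {α : Type} [DecidableEq α] {C : Finset (Finset α)}
    {S C1 : Finset α} (h1 : C1 ∈ C) (s1 : C1 ⊆ S) (n1 : C1.Nonempty) :
    C1 ∈ FRestrict C S := by
  rw [FRestrict, Finset.mem_filter, Finset.mem_image]
  exact ⟨⟨C1, h1, Finset.inter_eq_left.mpr s1⟩, n1⟩

/-- The union of two ST-sets with nonempty intersection whose union is not all of `X`
is again an ST-set; consequently, distinct maximal ST-sets (whose union is not all
of `X`) are disjoint. -/
theorem stset_union_and_maximal_disjoint {α : Type} [DecidableEq α]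
    (X : Finset α) (C : Finset (Finset α))
    (hC : ∀ C0 ∈ C, C0 ⊂ X ∧ C0.Nonempty) :
    (∀ S T : Finset α, FSTSet X C S → FSTSet X C T → (S ∩ T).Nonempty →
      S ∪ T ≠ X → FSTSet X C (S ∪ T)) ∧
    (∀ S T : Finset α, FMaxSTSet X C S → FMaxSTSet X C T → S ≠ T →
      S ∪ T ≠ X → S ∩ T = ∅) := by
  have main : ∀ S T : Finset α, FSTSet X C S → FSTSet X C T → (S ∩ T).Nonempty →
      S ∪ T ≠ X → FSTSet X C (S ∪ T) := by
    intro S T hS hT hST hne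
    obtain ⟨hSX, hSsep, hSres⟩ := hS
    obtain ⟨hTX, hTsep, hTres⟩ := hT
    -- every cluster is compatible with S and T
    have compS : ∀ C0 ∈ C, FCompatible C0 S := fun C0 h0 =>
      compat_of_not_incompat (fun hi => hSsep ⟨C0, h0, hi⟩)
    have compT : ∀ C0 ∈ C, FCompatible C0 T := fun C0 h0 =>
      compat_of_not_incompat (fun hi => hTsep ⟨C0, h0, hi⟩)
    have cls : ∀ C0 ∈ C, C0 ∩ (S ∪ T) = ∅ ∨ C0 ⊆ S ∨ C0 ⊆ T ∨ S ∪ T ⊆ C0 :=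
      fun C0 h0 => classify_compat (compS C0 h0) (compT C0 h0) hST
    refine ⟨?_, ?_, ?_⟩
    · exact Finset.ssubset_iff_subset_ne.mpr
        ⟨Finset.union_subset hSX.subset hTX.subset, hne⟩
    · rintro ⟨C0, h0, hi⟩
      refine not_incompat_of_compat ?_ hi
      rcases cls C0 h0 with h | h | h | h
      · left; exact h
      · right; left; exact h.trans Finset.subset_union_left
      · right; left; exact h.trans Finset.subset_union_right
      · right; right; exact h
    · intro A hA B hB
      rw [FRestrict, Finset.mem_filter, Finset.mem_image] at hA hB
      obtain ⟨⟨C1, h1, e1⟩, nA⟩ := hA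
      obtain ⟨⟨C2, h2, e2⟩, nB⟩ := hB
      subst e1; subst e2
      -- helper: both clusters contained in same ST-set
      have both : ∀ {U : Finset α} {D1 D2 : Finset α},
          (∀ A ∈ FRestrict C U, ∀ B ∈ FRestrict C U, FCompatible A B) →
          D1 ∈ C → D2 ∈ C → D1 ⊆ U → D2 ⊆ U → D1.Nonempty → D2.Nonempty →
          FCompatible D1 D2 := by
        intro U D1 D2 hres m1 m2 s1 s2 n1 n2
        exact hres D1 (mem_restrict_of_subset m1 s1 n1) D2 (mem_restrict_of_subset m2 s2 n2)
      have key : ∀ {D1 D2 : Finset α}, D1 ∈ C → D2 ∈ C →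
          (D1 ⊆ S ∨ D1 ⊆ T) → (D2 ⊆ S ∨ D2 ⊆ T) →
          D1.Nonempty → D2.Nonempty → FCompatible D1 D2 := by
        intro D1 D2 m1 m2 c1 c2 n1 n2
        rcases c1 with c1 | c1 <;> rcases c2 with c2 | c2
        · exact both hSres m1 m2 c1 c2 n1 n2
        · -- D1 ⊆ S, D2 ⊆ T
          by_cases hd : D1 ∩ D2 = ∅
          · left; exact hd
          · have hd' : (D1 ∩ D2).Nonempty := Finset.nonempty_iff_ne_empty.mpr hd
            rcases compT D1 m1 with h | h | h
            · exfalso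
              obtain ⟨x, hx⟩ := hd'
              rw [Finset.mem_inter] at hx
              have : x ∈ D1 ∩ T := Finset.mem_inter.mpr ⟨hx.1, c2 hx.2⟩
              rw [h] at this; exact absurd this (by simp)
            · exact both hTres m1 m2 h c2 n1 n2
            · right; right; exact c2.trans h
        · -- symmetric
          by_cases hd : D1 ∩ D2 = ∅
          · left; exact hd
          · have hd' : (D1 ∩ D2).Nonempty := Finset.nonempty_iff_ne_empty.mpr hd
            rcases compT D2 m2 with h | h | h
            · exfalso
              obtain ⟨x, hx⟩ := hd'
              rw [Finset.mem_inter] at hx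
              have : x ∈ D2 ∩ T := Finset.mem_inter.mpr ⟨hx.2, c1 hx.1⟩
              rw [h] at this; exact absurd this (by simp)
            · exact both hTres m1 m2 c1 h n1 n2
            · right; left; exact c1.trans h
        · exact both hTres m1 m2 c1 c2 n1 n2
      rcases cls C1 h1 with g1 | g1
      · rw [g1] at nA; exact absurd nA (by simp)
      rcases cls C2 h2 with g2 | g2
      · rw [g2] at nB; exact absurd nB (by simp)
      -- handle S∪T ⊆ Ci cases
      rcases g1 with g1 | g1 | g1
      all_goals rcases g2 with g2 | g2 | g2
      case _ => -- C1⊆S, C2⊆S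
        rw [Finset.inter_eq_left.mpr (g1.trans Finset.subset_union_left),
            Finset.inter_eq_left.mpr (g2.trans Finset.subset_union_left)] at *
        exact key h1 h2 (Or.inl g1) (Or.inl g2) nA nB
      case _ =>
        rw [Finset.inter_eq_left.mpr (g1.trans Finset.subset_union_left),
            Finset.inter_eq_left.mpr (g2.trans Finset.subset_union_right)] at *
        exact key h1 h2 (Or.inl g1) (Or.inr g2) nA nB
      case _ => -- S∪T ⊆ C2 : B = S∪T ⊇ A
        right; left
        rw [Finset.inter_eq_right.mpr g2]
        exact Finset.inter_subset_right
      case _ =>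
        rw [Finset.inter_eq_left.mpr (g1.trans Finset.subset_union_right),
            Finset.inter_eq_left.mpr (g2.trans Finset.subset_union_left)] at *
        exact key h1 h2 (Or.inr g1) (Or.inl g2) nA nB
      case _ =>
        rw [Finset.inter_eq_left.mpr (g1.trans Finset.subset_union_right),
            Finset.inter_eq_left.mpr (g2.trans Finset.subset_union_right)] at *
        exact key h1 h2 (Or.inr g1) (Or.inr g2) nA nB
      case _ =>
        right; left
        rw [Finset.inter_eq_right.mpr g2]
        exact Finset.inter_subset_right
      all_goals {
        right; right
        rw [Finset.inter_eq_right.mpr g1]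
        exact Finset.inter_subset_right }
  refine ⟨main, ?_⟩
  intro S T hS hT hne hX
  by_contra h
  have hST : (S ∩ T).Nonempty := Finset.nonempty_iff_ne_empty.mpr h
  have hU := main S T hS.1 hT.1 hST hX
  have e1 := hS.2 _ hU Finset.subset_union_left
  have e2 := hT.2 _ hU Finset.subset_union_right
  exact hne (e1.trans e2.symm)
end

section
/- In a binary simple level-2 network (a biconnected binary network in which every cut-edge leads to a leaf and the reticulation number is 2), there exists a leaf whose parent is a reticulation. -/
/-- A rooted phylogenetic network: a set of directed edges on vertex type `V`,
a root, and a partial labeling of vertices by taxa in `α`. -/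
structure Network (V α : Type) where
  edges : Set (V × V)
  root : V
  label : V → Option α

namespace Network

variable {V α : Type}

/-- indegree of a vertex -/
noncomputable def indeg (N : Network V α) (v : V) : ℕ := {e ∈ N.edges | e.2 = v}.ncard

/-- outdegree of a vertex -/
noncomputable def outdeg (N : Network V α) (v : V) : ℕ := {e ∈ N.edges | e.1 = v}.ncard

def IsLeaf (N : Network V α) (v : V) : Prop := N.outdeg v = 0

def IsReticulation (N : Network V α) (v : V) : Prop := 2 ≤ N.indeg v

/-- directed reachability within an edge set -/
def reachesIn (E' : Set (V × V)) (u v : V) : Prop :=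
  Relation.ReflTransGen (fun a b => (a, b) ∈ E') u v

/-- `N` is a rooted phylogenetic network: finitely many edges, every vertex reachable
from the root, acyclic, the root has indegree 0, and the leaves are bijectively
labeled by the taxa. -/
def IsNetwork (N : Network V α) : Prop :=
  N.edges.Finite ∧
  (∀ v, reachesIn N.edges N.root v) ∧
  (∀ v, ¬ Relation.TransGen (fun a b => (a, b) ∈ N.edges) v v) ∧
  N.indeg N.root = 0 ∧
  (∀ v, (N.label v).isSome ↔ N.IsLeaf v) ∧
  (∀ x : α, ∃! v, N.label v = some x)

/-- A switching keeps all tree edges and exactly one incoming edge per reticulation. -/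
def Switching (N : Network V α) (E' : Set (V × V)) : Prop :=
  E' ⊆ N.edges ∧
  (∀ e ∈ N.edges, ¬ N.IsReticulation e.2 → e ∈ E') ∧
  (∀ v, N.IsReticulation v → {e ∈ E' | e.2 = v}.ncard = 1)

/-- The set of taxa labeling leaves reachable from `v` using only edges of `E'`. -/
def clusterIn (N : Network V α) (E' : Set (V × V)) (v : V) : Set α :=
  {x | ∃ w, reachesIn E' v w ∧ N.label w = some x}

/-- Edge `e` represents cluster `C0` in the softwired sense. -/
def EdgeRepresents (N : Network V α) (e : V × V) (C0 : Set α) : Prop :=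
  ∃ E', N.Switching E' ∧ e ∈ E' ∧ N.clusterIn E' e.2 = C0

/-- `N` represents cluster `C0` in the softwired sense. -/
def Represents (N : Network V α) (C0 : Set α) : Prop :=
  ∃ E', N.Switching E' ∧ ∃ e ∈ E', N.clusterIn E' e.2 = C0

def RepresentsAll (N : Network V α) (C : Set (Set α)) : Prop :=
  ∀ C0 ∈ C, N.Represents C0

/-- undirected connectivity within an edge set -/
def symConn (E' : Set (V × V)) (a b : V) : Prop :=
  Relation.ReflTransGen (fun u w => (u, w) ∈ E' ∨ (w, u) ∈ E') a b

def IsCutEdge (N : Network V α) (e : V × V) : Prop :=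
  e ∈ N.edges ∧ ¬ symConn (N.edges \ {e}) e.1 e.2

def vertsOf (B : Set (V × V)) : Set V := Prod.fst '' B ∪ Prod.snd '' B

def removeNode (B : Set (V × V)) (v : V) : Set (V × V) :=
  {e ∈ B | e.1 ≠ v ∧ e.2 ≠ v}

/-- An edge set is biconnected if it is (undirectedly) connected and remains
connected after removing any single node. -/
def IsBiconnected (B : Set (V × V)) : Prop :=
  (∀ a ∈ vertsOf B, ∀ b ∈ vertsOf B, symConn B a b) ∧
  (∀ v : V, ∀ a ∈ vertsOf B, ∀ b ∈ vertsOf B, a ≠ v → b ≠ v →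
    symConn (removeNode B v) a b)

/-- biconnected component: maximal nonempty biconnected edge subset -/
def IsBCC (N : Network V α) (B : Set (V × V)) : Prop :=
  B ⊆ N.edges ∧ B.Nonempty ∧ IsBiconnected B ∧
  ∀ B', B ⊆ B' → B' ⊆ N.edges → IsBiconnected B' → B' = B

/-- reticulation number of an edge set: |E| - |V| + 1 -/
noncomputable def retNum (B : Set (V × V)) : ℕ := B.ncard + 1 - (vertsOf B).ncard

/-- level-k: every biconnected component has reticulation number at most k -/
def IsLevel (N : Network V α) (k : ℕ) : Prop := ∀ B, N.IsBCC B → retNum B ≤ k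

/-- reticulation number of the whole network: sum over v of (indeg v - 1),
which equals |E| minus the number of vertices of positive indegree. -/
noncomputable def reticulationNumber (N : Network V α) : ℕ :=
  N.edges.ncard - {v | 0 < N.indeg v}.ncard

def IsBinary (N : Network V α) : Prop :=
  ∀ v, (N.indeg v ≤ 1 ∧ N.outdeg v ≤ 2) ∨ (N.indeg v ≤ 2 ∧ N.outdeg v ≤ 1)

end Network

/-- Two clusters are compatible if disjoint or nested. -/
def ClCompatible {α : Type} (A B : Set α) : Prop := A ∩ B = ∅ ∨ A ⊆ B ∨ B ⊆ A

/-- Two sets are incompatible if neither disjoint nor nested. -/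
def ClIncompatible {α : Type} (A B : Set α) : Prop :=
  (A ∩ B).Nonempty ∧ (A \ B).Nonempty ∧ (B \ A).Nonempty

/-- `S` is separated by the cluster set `C` if some cluster is incompatible with it. -/
def ClSeparated {α : Type} (C : Set (Set α)) (S : Set α) : Prop :=
  ∃ C0 ∈ C, ClIncompatible C0 S

/-- In any simple level-k network with k ≥ 1 (a network whose cut-edges all have leaf
heads and whose reticulation number is k, leaves having indegree at most 1), there
is a reticulation all of whose children are leaves; in the binary simple case, some
reticulation has a leaf child (i.e. there exists a leaf whose parent is a
reticulation). -/
theorem simple_network_ret_with_leaf_children {V α : Type}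
    (N : Network V α) (k : ℕ) (hk : 1 ≤ k)
    (hN : N.IsNetwork)
    (hleafdeg : ∀ v, N.IsLeaf v → N.indeg v ≤ 1)
    (hsimple : ∀ e, N.IsCutEdge e → N.IsLeaf e.2)
    (hret : N.reticulationNumber = k) :
    (∃ r, N.IsReticulation r ∧ ∀ w, (r, w) ∈ N.edges → N.IsLeaf w) ∧
    (N.IsBinary → ∃ r w, N.IsReticulation r ∧ (r, w) ∈ N.edges ∧ N.IsLeaf w) := by
  obtain ⟨hfin, hreach, hacyc, hroot, hlab, hbij⟩ := hN
  set step : V → V → Prop := fun a b => (a, b) ∈ N.edges with hstep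
  -- finiteness of in-edge sets
  have hin_fin : ∀ v : V, {e ∈ N.edges | e.2 = v}.Finite := fun v =>
    hfin.subset (fun e he => he.1)
  have hout_fin : ∀ v : V, {e ∈ N.edges | e.1 = v}.Finite := fun v =>
    hfin.subset (fun e he => he.1)
  -- indegree facts
  have indeg_two : ∀ (x y v : V), (x, v) ∈ N.edges → (y, v) ∈ N.edges → x ≠ y →
      2 ≤ N.indeg v := by
    intro x y v hx hy hxy
    have : 1 < {e ∈ N.edges | e.2 = v}.ncard := by
      rw [Set.one_lt_ncard (hin_fin v)]
      exact ⟨(x, v), ⟨hx, rfl⟩, (y, v), ⟨hy, rfl⟩, by simp [hxy]⟩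
    exact this
  have indeg_pos : ∀ (x v : V), (x, v) ∈ N.edges → 0 < N.indeg v := by
    intro x v hx
    have : 0 < {e ∈ N.edges | e.2 = v}.ncard := by
      rw [Set.ncard_pos (hin_fin v)]
      exact ⟨(x, v), hx, rfl⟩
    exact this
  have uniq_in : ∀ (x y v : V), N.indeg v ≤ 1 → (x, v) ∈ N.edges → (y, v) ∈ N.edges →
      x = y := by
    intro x y v hv hx hy
    by_contra hne
    exact absurd (indeg_two x y v hx hy hne) (by omega)
  -- positive-indegree vertices form a finite set
  have hposfin : {v | 0 < N.indeg v}.Finite := by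
    apply (hfin.image Prod.snd).subset
    intro v hv
    have hne : {e ∈ N.edges | e.2 = v}.Nonempty :=
      Set.nonempty_of_ncard_ne_zero hv.ne'
    obtain ⟨e, he, hev⟩ := hne
    exact ⟨e, he, hev⟩
  -- existence of a reticulation
  have hretic_ex : ∃ v, N.IsReticulation v := by
    by_contra h
    push_neg at h
    have hle : ∀ v, N.indeg v ≤ 1 := by
      intro v
      have := h v
      unfold Network.IsReticulation at this
      exact Nat.lt_succ_iff.mp (Nat.lt_of_not_le this)
    have hinj : Set.InjOn Prod.snd N.edges := by
      intro e1 h1 e2 h2 heq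
      have h1' : (e1.1, e1.2) ∈ N.edges := by simpa using h1
      have h2' : (e2.1, e2.2) ∈ N.edges := by simpa using h2
      have : e1.1 = e2.1 := uniq_in e1.1 e2.1 e1.2 (hle _) h1' (heq ▸ h2')
      exact Prod.ext this heq
    have hsub : Prod.snd '' N.edges ⊆ {v | 0 < N.indeg v} := by
      rintro v ⟨e, he, rfl⟩
      exact indeg_pos e.1 e.2 (by simpa using he)
    have hcard : N.edges.ncard ≤ {v | 0 < N.indeg v}.ncard := by
      calc N.edges.ncard = (Prod.snd '' N.edges).ncard :=
            (Set.ncard_image_of_injOn hinj).symm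
        _ ≤ {v | 0 < N.indeg v}.ncard := Set.ncard_le_ncard hsub hposfin
    have : N.reticulationNumber = 0 := by
      unfold Network.reticulationNumber
      exact Nat.sub_eq_zero_of_le hcard
    rw [this] at hret
    subst hret
    exact Nat.not_succ_le_zero 0 hk
  -- the set of reticulations is finite
  have hSfin : {v | N.IsReticulation v}.Finite := by
    apply hposfin.subset
    intro v hv
    unfold Network.IsReticulation at hv
    show 0 < N.indeg v
    exact Nat.lt_of_lt_of_le Nat.zero_lt_two hv
  -- pick a lowest reticulation
  obtain ⟨r0, hr0⟩ := hretic_ex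
  haveI : Finite ↥{v | N.IsReticulation v} := hSfin.to_subtype
  set R : ↥{v | N.IsReticulation v} → ↥{v | N.IsReticulation v} → Prop :=
    fun a b => Relation.TransGen step b.1 a.1 with hR
  haveI : IsTrans _ R := ⟨fun _ _ _ h1 h2 => h2.trans h1⟩
  haveI : IsIrrefl _ R := ⟨fun a h => hacyc a.1 h⟩
  obtain ⟨m, -, hm⟩ := (Finite.wellFounded_of_trans_of_irrefl R).has_min
    Set.univ ⟨⟨r0, hr0⟩, trivial⟩
  set r : V := m.1 with hrdef
  have hr : N.IsReticulation r := m.2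
  have hlow : ∀ u, N.IsReticulation u → ¬ Relation.TransGen step r u := by
    intro u hu ht
    exact hm ⟨u, hu⟩ trivial ht
  -- main claim: every child of r is a leaf
  have hmain : ∀ w, (r, w) ∈ N.edges → N.IsLeaf w := by
    intro w hedge
    -- everything strictly below r has indegree ≤ 1
    have hbelow : ∀ u, Relation.TransGen step r u → N.indeg u ≤ 1 := by
      intro u hu
      by_contra hc
      exact hlow u (Nat.lt_of_not_le hc) hu
    have hwle : N.indeg w ≤ 1 := hbelow w (Relation.TransGen.single hedge)
    -- descendants of w are closed under undirected steps avoiding (r, w)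
    have hD : ∀ u, Relation.ReflTransGen
        (fun a b => (a, b) ∈ N.edges \ {(r, w)} ∨ (b, a) ∈ N.edges \ {(r, w)}) w u →
        Relation.ReflTransGen step w u := by
      intro u hu
      induction hu with
      | refl => exact Relation.ReflTransGen.refl
      | tail _ hbc ih =>
        rename_i b c _
        rcases hbc with hbc | hcb
        · exact ih.tail hbc.1
        · -- (c, b) ∈ edges, (c, b) ≠ (r, w), b is a descendant of w
          obtain ⟨hcbE, hcbne⟩ := hcb
          have hcbne' : (c, b) ≠ (r, w) := by simpa using hcbne
          by_cases hbw : b = w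
          · subst hbw
            have hcr : c = r := uniq_in c r b hwle hcbE hedge
            subst hcr
            exact absurd rfl hcbne'
          · have htb : Relation.TransGen step w b := by
              rcases Relation.reflTransGen_iff_eq_or_transGen.mp ih with h | h
              · exact absurd h hbw
              · exact h
            have hble : N.indeg b ≤ 1 := hbelow b (Relation.TransGen.head hedge htb)
            obtain ⟨p, hwp, hpb⟩ := Relation.TransGen.tail'_iff.mp htb
            have : c = p := uniq_in c p b hble hcbE hpb
            exact this ▸ hwp
    -- the edge (r, w) is a cut edge
    have hcut : N.IsCutEdge (r, w) := by
      refine ⟨hedge, ?_⟩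
      intro hconn
      have hsym : Symmetric (fun a b : V =>
          (a, b) ∈ N.edges \ {(r, w)} ∨ (b, a) ∈ N.edges \ {(r, w)}) :=
        fun a b h => h.symm
      have hwr : Relation.ReflTransGen
          (fun a b => (a, b) ∈ N.edges \ {(r, w)} ∨ (b, a) ∈ N.edges \ {(r, w)}) w r :=
        (@Relation.ReflTransGen.symmetric _ _ ⟨hsym⟩).symm _ _ hconn
      have : Relation.ReflTransGen step w r := hD r hwr
      exact hacyc r (Relation.TransGen.head' hedge this)
    exact hsimple (r, w) hcut
  refine ⟨⟨r, hr, hmain⟩, fun _ => ?_⟩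
  -- r is not a leaf, so it has a child, which is a leaf
  have hnl : ¬ N.IsLeaf r := by
    intro hl
    exact absurd (le_trans hr (hleafdeg r hl)) (by norm_num)
  have hne : {e ∈ N.edges | e.1 = r}.Nonempty := by
    apply Set.nonempty_of_ncard_ne_zero
    intro h0
    exact hnl h0
  obtain ⟨e, heE, her⟩ := hne
  have hedge : (r, e.2) ∈ N.edges := by
    have : e = (e.1, e.2) := rfl
    rw [← her]
    simpa using heE
  exact ⟨r, e.2, hr, hedge, hmain e.2 hedge⟩
end

section
/- Contracting a contraction-safe tree edge preserves representation: if N is a network representing cluster set C and e is a tree edge of N such that no cluster in C is represented by e, then the network N' obtained by contracting e still represents C in the softwired sense. -/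
/-- the map identifying the head of `e` with its tail -/
def contractMap {V : Type} [DecidableEq V] (e : V × V) (w : V) : V :=
  if w = e.2 then e.1 else w

/-- the network obtained from `N` by contracting the edge `e` -/
def contract {V α : Type} [DecidableEq V] (N : Network V α) (e : V × V) :
    Network V α where
  edges := (fun g => (contractMap e g.1, contractMap e g.2)) '' (N.edges \ {e})
  root := contractMap e N.root
  label := fun w => if w = e.2 then none else N.label w

/-- Contracting a contraction-safe tree edge preserves representation: if `N`
represents the cluster set `C` (which contains all singletons), and `e` is a tree
edge of `N` representing no cluster of `C`, then the network obtained by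
contracting `e` still represents `C` in the softwired sense. -/
theorem contract_safe_edge_preserves {V α : Type} [DecidableEq V]
    (N : Network V α) (C : Set (Set α)) (e : V × V)
    (hN : N.IsNetwork)
    (hsing : ∀ x : α, {x} ∈ C)
    (he : e ∈ N.edges) (htree : ¬ N.IsReticulation e.2)
    (hrep : N.RepresentsAll C)
    (hsafe : ∀ C0 ∈ C, ¬ N.EdgeRepresents e C0) :
    (contract N e).RepresentsAll C := by
    classical
  obtain ⟨hfin, -, hacyc, -, hleaf, -⟩ := hN
  have hee : (e.1, e.2) ∈ N.edges := by simpa using he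
  have hne : e.1 ≠ e.2 := by
    intro h
    exact hacyc e.2 (Relation.TransGen.single (show (e.2, e.2) ∈ N.edges from h ▸ hee))
  have hcm2 : contractMap e e.2 = e.1 := if_pos rfl
  have hcmid : ∀ w, w ≠ e.2 → contractMap e w = w := fun w hw => if_neg hw
  have hcmne : ∀ w, contractMap e w ≠ e.2 := by
    intro w
    by_cases hw : w = e.2
    · rw [hw, hcm2]; exact hne
    · rw [hcmid w hw]; exact hw
  -- the only edge of N with head e.2 is e itself
  have hIn2 : ∀ g ∈ N.edges, g.2 = e.2 → g = e := by
    intro g hg hg2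
    by_contra hge
    apply htree
    have hfin2 : {k ∈ N.edges | k.2 = e.2}.Finite := hfin.subset (Set.sep_subset _ _)
    have h1 : 1 < {k ∈ N.edges | k.2 = e.2}.ncard :=
      (Set.one_lt_ncard hfin2).mpr ⟨g, ⟨hg, hg2⟩, e, ⟨he, rfl⟩, hge⟩
    show 2 ≤ N.indeg e.2
    unfold Network.indeg
    omega
  have hlabnone : ∀ v, ¬ N.IsLeaf v → N.label v = none := by
    intro v hv
    cases h : N.label v with
    | none => rfl
    | some x => exact absurd ((hleaf v).mp (by simp [h])) hv
  have hnl1 : ¬ N.IsLeaf e.1 := by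
    intro hl
    unfold Network.IsLeaf Network.outdeg at hl
    have hfe1 : {k ∈ N.edges | k.1 = e.1}.Finite := hfin.subset (Set.sep_subset _ _)
    have : {k ∈ N.edges | k.1 = e.1} = ∅ := (Set.ncard_eq_zero hfe1).mp hl
    exact absurd this (Set.nonempty_iff_ne_empty.mp ⟨e, he, rfl⟩)
  have hnl2 : ¬ N.IsLeaf e.2 := by
    intro hl
    obtain ⟨x, hx⟩ := Option.isSome_iff_exists.mp ((hleaf e.2).mpr hl)
    obtain ⟨E0, hsw0, -⟩ := hrep {x} (hsing x)
    apply hsafe {x} (hsing x)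
    refine ⟨E0, hsw0, hsw0.2.1 e he htree, ?_⟩
    unfold Network.IsLeaf Network.outdeg at hl
    have hout : {k ∈ N.edges | k.1 = e.2} = ∅ :=
      (Set.ncard_eq_zero (hfin.subset (Set.sep_subset _ _))).mp hl
    have hstop : ∀ w, Network.reachesIn E0 e.2 w → w = e.2 := by
      intro w hw
      rcases Relation.ReflTransGen.cases_head hw with h | ⟨c, hc, -⟩
      · exact h.symm
      · have hmem : (e.2, c) ∈ {k ∈ N.edges | k.1 = e.2} := ⟨hsw0.1 hc, rfl⟩
        rw [hout] at hmem
        exact hmem.elim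
    ext y
    simp only [Network.clusterIn, Set.mem_setOf_eq, Set.mem_singleton_iff]
    constructor
    · rintro ⟨w, hw, hlw⟩
      rw [hstop w hw, hx] at hlw
      exact (Option.some_inj.mp hlw).symm
    · rintro rfl
      exact ⟨e.2, Relation.ReflTransGen.refl, hx⟩
  have hlab1 : N.label e.1 = none := hlabnone e.1 hnl1
  have hlab2 : N.label e.2 = none := hlabnone e.2 hnl2
  -- main argument
  intro C0 hC0
  obtain ⟨E', hsw, f, hfE, hcl⟩ := hrep C0 hC0
  obtain ⟨hsub, htr, hret⟩ := hsw
  have heE' : e ∈ E' := htr e he htree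
  have hfe : f ≠ e := by
    rintro rfl
    exact hsafe C0 hC0 ⟨E', ⟨hsub, htr, hret⟩, hfE, hcl⟩
  have hf2 : f.2 ≠ e.2 := fun h => hfe (hIn2 f (hsub hfE) h)
  set φ : V × V → V × V := fun g => (contractMap e g.1, contractMap e g.2) with hφdef
  set E'' : Set (V × V) := φ '' (E' \ {e}) with hE''def
  have hME : (contract N e).edges = φ '' (N.edges \ {e}) := rfl
  have hMfin : (contract N e).edges.Finite := hfin.diff.image _
  have hE''M : E'' ⊆ (contract N e).edges := by
    rw [hME]
    exact Set.image_mono (fun g hg => ⟨hsub hg.1, hg.2⟩)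
  have hpre : ∀ g' ∈ (contract N e).edges,
      ∃ k, k ∈ N.edges ∧ k ≠ e ∧ φ k = g' ∧ k.2 = g'.2 ∧ g'.2 ≠ e.2 := by
    rw [hME]
    rintro g' ⟨k, ⟨hk, hke⟩, rfl⟩
    have hke' : k ≠ e := hke
    have hk2 : k.2 ≠ e.2 := fun h => hke' (hIn2 k hk h)
    exact ⟨k, hk, hke', rfl, (hcmid k.2 hk2).symm, hcmne k.2⟩
  have hpreE : ∀ g' ∈ E'',
      ∃ k, k ∈ E' ∧ k ≠ e ∧ φ k = g' ∧ k.2 = g'.2 ∧ g'.2 ≠ e.2 := by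
    rintro g' ⟨k, ⟨hk, hke⟩, rfl⟩
    have hke' : k ≠ e := hke
    have hk2 : k.2 ≠ e.2 := fun h => hke' (hIn2 k (hsub hk) h)
    exact ⟨k, hk, hke', rfl, (hcmid k.2 hk2).symm, hcmne k.2⟩
  refine ⟨E'', ⟨hE''M, ?_, ?_⟩, φ f, ⟨f, ⟨hfE, hfe⟩, rfl⟩, ?_⟩
  · -- tree edges of the contraction are kept
    intro f' hf' hnret
    obtain ⟨g, hg, hge, hfg, hg2, -⟩ := hpre f' hf'
    by_cases hv : N.IsReticulation g.2
    · obtain ⟨h, hh⟩ := Set.ncard_eq_one.mp (hret g.2 hv)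
      have hhmem : h ∈ {k ∈ E' | k.2 = g.2} := by rw [hh]; exact rfl
      obtain ⟨hh1, hh2⟩ := hhmem
      have hg2ne : g.2 ≠ e.2 := fun hq => hge (hIn2 g hg hq)
      have hhe : h ≠ e := fun hq => hg2ne (by rw [← hh2, hq])
      by_cases hfh : φ h = f'
      · exact ⟨h, ⟨hh1, hhe⟩, hfh⟩
      · exfalso
        apply hnret
        have h1 : φ h ∈ {k ∈ (contract N e).edges | k.2 = f'.2} := by
          refine ⟨by rw [hME]; exact ⟨h, ⟨hsub hh1, hhe⟩, rfl⟩, ?_⟩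
          show contractMap e h.2 = f'.2
          rw [hh2, hcmid _ hg2ne]
          exact hg2
        have h2 : f' ∈ {k ∈ (contract N e).edges | k.2 = f'.2} := ⟨hf', rfl⟩
        have h3 : 1 < {k ∈ (contract N e).edges | k.2 = f'.2}.ncard :=
          (Set.one_lt_ncard (hMfin.subset (Set.sep_subset _ _))).mpr ⟨φ h, h1, f', h2, hfh⟩
        show 2 ≤ (contract N e).indeg f'.2
        unfold Network.indeg
        omega
    · exact ⟨g, ⟨htr g hg hv, hge⟩, hfg⟩
  · -- reticulations get exactly one incoming edge
    intro v hv
    have hvfin : {k ∈ (contract N e).edges | k.2 = v}.Finite := hMfin.subset (Set.sep_subset _ _)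
    unfold Network.IsReticulation Network.indeg at hv
    have hNret : N.IsReticulation v := by
      by_contra hnv
      unfold Network.IsReticulation Network.indeg at hnv
      have hle1 : {k ∈ N.edges | k.2 = v}.ncard ≤ 1 := by omega
      have hsg := (Set.ncard_le_one (hfin.subset (Set.sep_subset _ _))).mp hle1
      have hMle : {k ∈ (contract N e).edges | k.2 = v}.ncard ≤ 1 := by
        rw [Set.ncard_le_one hvfin]
        rintro a ⟨ha, ha2⟩ b ⟨hb, hb2⟩
        obtain ⟨k, hk, hke, hfk, hk2, -⟩ := hpre a ha
        obtain ⟨l, hl, hle', hfl, hl2, -⟩ := hpre b hb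
        have : k = l := hsg k ⟨hk, by rw [hk2, ha2]⟩ l ⟨hl, by rw [hl2, hb2]⟩
        rw [← hfk, ← hfl, this]
      omega
    obtain ⟨h, hh⟩ := Set.ncard_eq_one.mp (hret v hNret)
    have hhmem : h ∈ {k ∈ E' | k.2 = v} := by rw [hh]; exact rfl
    obtain ⟨hh1, hh2⟩ := hhmem
    have hv2 : v ≠ e.2 := by
      intro hq
      have hne2 : {k ∈ (contract N e).edges | k.2 = v}.Nonempty :=
        Set.nonempty_of_ncard_ne_zero (by omega)
      obtain ⟨k, hk, hk2⟩ := hne2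
      obtain ⟨m, -, -, -, -, hkne⟩ := hpre k hk
      exact hkne (hk2.trans hq)
    have hhe : h ≠ e := fun hq => hv2 (by rw [← hh2, hq])
    have hset : {k ∈ E'' | k.2 = v} = {φ h} := by
      ext g'
      constructor
      · rintro ⟨hg', hg'2⟩
        obtain ⟨k, hk, hke, hfk, hk2, -⟩ := hpreE g' hg'
        have hkh : k = h := by
          have hmem : k ∈ {k ∈ E' | k.2 = v} := ⟨hk, by rw [hk2, hg'2]⟩
          rwa [hh, Set.mem_singleton_iff] at hmem
        rw [← hfk, hkh]
        rfl
      · rintro rfl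
        refine ⟨⟨h, ⟨hh1, hhe⟩, rfl⟩, ?_⟩
        show contractMap e h.2 = v
        rw [hh2, hcmid _ hv2]
    show {k ∈ E'' | k.2 = v}.ncard = 1
    rw [hset, Set.ncard_singleton]
  · -- the cluster is preserved
    show (contract N e).clusterIn E'' (contractMap e f.2) = C0
    rw [← hcl]
    have hpush : ∀ a b, Network.reachesIn E' a b →
        Network.reachesIn E'' (contractMap e a) (contractMap e b) := by
      intro a b h
      induction h with
      | refl => exact Relation.ReflTransGen.refl
      | @tail b' c hab hstep ih =>
        by_cases hbe : (b', c) = e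
        · have h1 : b' = e.1 := congrArg Prod.fst hbe
          have h2 : c = e.2 := congrArg Prod.snd hbe
          have heq : contractMap e c = contractMap e b' := by
            rw [h1, h2, hcm2, hcmid e.1 hne]
          rw [heq]
          exact ih
        · exact ih.tail ⟨(b', c), ⟨hstep, hbe⟩, rfl⟩
    have hlift : ∀ b, Network.reachesIn E'' (contractMap e f.2) b →
        ∃ w, contractMap e w = b ∧ Network.reachesIn E' f.2 w ∧
          (w = e.2 → Network.reachesIn E' f.2 e.1) := by
      intro b h
      induction h with
      | refl => exact ⟨f.2, rfl, Relation.ReflTransGen.refl, fun h => absurd h hf2⟩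
      | @tail b' c hab hstep ih =>
        obtain ⟨w, hwb, hwr, hwe⟩ := ih
        obtain ⟨g, ⟨hgE, hge⟩, hgeq⟩ := hstep
        have hg1 : contractMap e g.1 = b' := congrArg Prod.fst hgeq
        have hg2 : contractMap e g.2 = c := congrArg Prod.snd hgeq
        have hgne : g ≠ e := hge
        have hg2ne : g.2 ≠ e.2 := fun hq => hgne (hIn2 g (hsub hgE) hq)
        have hstep' : Network.reachesIn E' g.1 g.2 :=
          Relation.ReflTransGen.single (show (g.1, g.2) ∈ E' by simpa using hgE)
        have hr1 : Network.reachesIn E' f.2 g.1 := by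
          by_cases hwg : w = g.1
          · rw [← hwg]; exact hwr
          · by_cases hw2 : w = e.2
            · have hb' : b' = e.1 := by rw [← hwb, hw2, hcm2]
              by_cases hg1e : g.1 = e.2
              · exact absurd (hw2.trans hg1e.symm) hwg
              · have hg1e1 : g.1 = e.1 := by rw [← hcmid g.1 hg1e, hg1, hb']
                rw [hg1e1]
                exact hwe hw2
            · have hww : w = b' := by rw [← hwb, hcmid w hw2]
              by_cases hg1e : g.1 = e.2
              · have hwe1 : w = e.1 := by rw [hww, ← hg1, hg1e, hcm2]
                rw [hg1e]
                exact Relation.ReflTransGen.tail (hwe1 ▸ hwr)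
                  (show (e.1, e.2) ∈ E' by simpa using heE')
              · have hcon : g.1 = w := by rw [← hcmid g.1 hg1e, hg1, hww]
                exact absurd hcon.symm hwg
        exact ⟨g.2, hg2, hr1.trans hstep', fun hq => absurd hq hg2ne⟩
    ext x
    simp only [Network.clusterIn, Set.mem_setOf_eq]
    constructor
    · rintro ⟨u, hu, hlab⟩
      have hu2 : u ≠ e.2 := by
        intro hq
        rw [show (contract N e).label u = none by simp [contract, hq]] at hlab
        exact Option.some_ne_none x hlab.symm
      have hlab' : N.label u = some x := by simpa [contract, hu2] using hlab
      obtain ⟨w, hwu, hwr, -⟩ := hlift u hu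
      have hw2 : w ≠ e.2 := by
        intro hq
        rw [hq, hcm2] at hwu
        rw [← hwu, hlab1] at hlab'
        exact Option.some_ne_none x hlab'.symm
      rw [hcmid w hw2] at hwu
      exact ⟨w, hwr, hwu ▸ hlab'⟩
    · rintro ⟨w, hwr, hlab⟩
      have hw2 : w ≠ e.2 := by
        intro hq
        rw [hq, hlab2] at hlab
        exact Option.some_ne_none x hlab.symm
      have hr := hpush f.2 w hwr
      rw [hcmid w hw2] at hr
      exact ⟨w, hr, by simpa [contract, hw2] using hlab⟩
end

section
/- In a rooted phylogenetic network N, if T is a strict subtree of N (a subtree such that every node of T except its root has the same indegree and outdegree in T as in N), then the set of leaf labels of T is not separated by the set of softwired clusters of N; moreover the clusters of N restricted to the leaf set of T are pairwise compatible, i.e. the leaf set of T is an ST-set with respect to the softwired clusters of N (provided it is a proper subset of X). -/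
/-- indegree within an arbitrary edge set -/
noncomputable def indegIn {V : Type} (T : Set (V × V)) (v : V) : ℕ := {e ∈ T | e.2 = v}.ncard

/-- outdegree within an arbitrary edge set -/
noncomputable def outdegIn {V : Type} (T : Set (V × V)) (v : V) : ℕ := {e ∈ T | e.1 = v}.ncard

/-- `T` is a strict subtree of `N` with root `t0`: a subgraph that is a tree in
which every node other than the root keeps its indegree and outdegree from `N`. -/
def IsStrictSubtree {V α : Type} (N : Network V α) (T : Set (V × V)) (t0 : V) :
    Prop :=
  T ⊆ N.edges ∧
  (∀ v ∈ Network.vertsOf T, Network.reachesIn T t0 v) ∧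
  (∀ v ∈ Network.vertsOf T, indegIn T v ≤ 1) ∧
  (∀ v ∈ Network.vertsOf T, v ≠ t0 →
    indegIn T v = N.indeg v ∧ outdegIn T v = N.outdeg v)

section Aux

open Network Relation

variable {V α : Type}

lemma reachesIn_mono {E F : Set (V × V)} (h : E ⊆ F) {a b : V}
    (hr : Network.reachesIn E a b) : Network.reachesIn F a b :=
  Relation.ReflTransGen.mono (fun _ _ hx => h hx) _ _ hr

/-- In a finite edge set where each vertex has indegree at most one, any two
ancestors of a common vertex are comparable. -/
lemma tree_comparable {T : Set (V × V)} (hfin : T.Finite)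
    (hindeg : ∀ v ∈ Network.vertsOf T, indegIn T v ≤ 1) :
    ∀ {z a b : V}, Network.reachesIn T a z → Network.reachesIn T b z →
      Network.reachesIn T a b ∨ Network.reachesIn T b a := by
  intro z a b ha hb
  induction hb using Relation.ReflTransGen.head_induction_on generalizing a with
  | refl => exact Or.inl ha
  | @head b c hbc hcz ih =>
    rcases ih ha with h | h
    · rcases Relation.ReflTransGen.cases_tail h with rfl | ⟨p, hap, hpc⟩
      · exact Or.inr (Relation.ReflTransGen.single hbc)
      · have hc : c ∈ Network.vertsOf T := Or.inr ⟨(b, c), hbc, rfl⟩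
        have h1 : indegIn T c ≤ 1 := hindeg c hc
        have hfin' : {e ∈ T | e.2 = c}.Finite := hfin.subset (fun e he => he.1)
        have heq : (p, c) = (b, c) :=
          (Set.ncard_le_one_iff hfin').mp h1 ⟨hpc, rfl⟩ ⟨hbc, rfl⟩
        have hp : p = b := congrArg Prod.fst heq
        exact Or.inl (hp ▸ hap)
    · exact Or.inr (Relation.ReflTransGen.head hbc h)

end Aux

/-- If `T` is a strict subtree of a network `N`, then the set `L` of leaf labels of
`T` is not separated by the softwired clusters of `N`, and the restriction of those
clusters to `L` is pairwise compatible; i.e. `L` is an ST-set with respect to the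
softwired clusters of `N` (provided `L` is a proper subset of the taxon set). -/
theorem strict_subtree_is_stset {V α : Type}
    (N : Network V α) (T : Set (V × V)) (t0 : V)
    (hN : N.IsNetwork) (hT : IsStrictSubtree N T t0) (hTne : T.Nonempty)
    (L : Set α)
    (hL : L = {x | ∃ w ∈ Network.vertsOf T, N.label w = some x})
    (hproper : L ⊂ Set.univ) :
    ¬ ClSeparated {C0 | N.Represents C0} L ∧
    (∀ A1 ∈ {A | ∃ C0, N.Represents C0 ∧ A = C0 ∩ L ∧ (C0 ∩ L).Nonempty},
     ∀ A2 ∈ {A | ∃ C0, N.Represents C0 ∧ A = C0 ∩ L ∧ (C0 ∩ L).Nonempty},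
      ClCompatible A1 A2) := by
  obtain ⟨hfinE, hreachN, hacyc, hrootin, hlab, huniq⟩ := hN
  obtain ⟨hTsub, hreachT, hindeg1, hdeg⟩ := hT
  have hTfin : T.Finite := hfinE.subset hTsub
  -- no edge of T points to the root t0 of T (acyclicity)
  have hnott0 : ∀ e ∈ T, e.2 ≠ t0 := by
    intro e he heq
    apply hacyc t0
    have ha : e.1 ∈ Network.vertsOf T := Or.inl ⟨e, he, rfl⟩
    have hr : Network.reachesIn N.edges t0 e.1 :=
      reachesIn_mono hTsub (hreachT e.1 ha)
    refine Relation.TransGen.tail' hr ?_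
    show (e.1, t0) ∈ N.edges
    rw [← heq]
    exact hTsub he
  -- all in-edges of a non-root vertex of T lie in T
  have hinT : ∀ v ∈ Network.vertsOf T, v ≠ t0 →
      {e ∈ N.edges | e.2 = v} = {e ∈ T | e.2 = v} := by
    intro v hv hvne
    refine (Set.eq_of_subset_of_ncard_le ?_ ?_ ?_).symm
    · exact fun e he => ⟨hTsub he.1, he.2⟩
    · exact le_of_eq (hdeg v hv hvne).1.symm
    · exact hfinE.subset (fun e he => he.1)
  -- all out-edges of a non-root vertex of T lie in T
  have houtT : ∀ v ∈ Network.vertsOf T, v ≠ t0 →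
      {e ∈ N.edges | e.1 = v} = {e ∈ T | e.1 = v} := by
    intro v hv hvne
    refine (Set.eq_of_subset_of_ncard_le ?_ ?_ ?_).symm
    · exact fun e he => ⟨hTsub he.1, he.2⟩
    · exact le_of_eq (hdeg v hv hvne).2.symm
    · exact hfinE.subset (fun e he => he.1)
  -- every switching contains all of T
  have hTsubE' : ∀ E', N.Switching E' → T ⊆ E' := by
    intro E' hE' e he
    apply hE'.2.1 e (hTsub he)
    intro hret
    have hv : e.2 ∈ Network.vertsOf T := Or.inr ⟨e, he, rfl⟩
    have h1 : indegIn T e.2 = N.indeg e.2 := (hdeg e.2 hv (hnott0 e he)).1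
    have h2 : indegIn T e.2 ≤ 1 := hindeg1 e.2 hv
    have : (2 : ℕ) ≤ N.indeg e.2 := hret
    omega
  -- paths starting inside T (not at t0) stay inside T
  have hstay : ∀ (E' : Set (V × V)), E' ⊆ N.edges → ∀ w z : V,
      w ∈ Network.vertsOf T → w ≠ t0 → Network.reachesIn E' w z →
      z ∈ Network.vertsOf T ∧ z ≠ t0 ∧ Network.reachesIn T w z := by
    intro E' hsub w z hw hwne h
    induction h with
    | refl => exact ⟨hw, hwne, Relation.ReflTransGen.refl⟩
    | @tail b c hwb hbc ih =>
      obtain ⟨hbT, hbne, hwbT⟩ := ih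
      have hout : (b, c) ∈ {e ∈ T | e.1 = b} := by
        rw [← houtT b hbT hbne]
        exact ⟨hsub hbc, rfl⟩
      have hcT : c ∈ Network.vertsOf T := Or.inr ⟨(b, c), hout.1, rfl⟩
      exact ⟨hcT, hnott0 (b, c) hout.1, hwbT.tail hout.1⟩
  -- paths entering T must come through t0
  have henter : ∀ (E' : Set (V × V)), E' ⊆ N.edges → ∀ w z : V,
      Network.reachesIn E' w z → z ∈ Network.vertsOf T →
      (w ∈ Network.vertsOf T ∧ w ≠ t0) ∨ Network.reachesIn E' w t0 := by
    intro E' hsub w z h hz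
    induction h using Relation.ReflTransGen.head_induction_on with
    | refl =>
      by_cases hz0 : z = t0
      · exact Or.inr (hz0 ▸ Relation.ReflTransGen.refl)
      · exact Or.inl ⟨hz, hz0⟩
    | @head w c hwc hcz ih =>
      rcases ih with ⟨hcT, hcne⟩ | hct0
      · have hin : (w, c) ∈ {e ∈ T | e.2 = c} := by
          rw [← hinT c hcT hcne]
          exact ⟨hsub hwc, rfl⟩
        have hwT : w ∈ Network.vertsOf T := Or.inl ⟨(w, c), hin.1, rfl⟩
        by_cases hw0 : w = t0
        · exact Or.inr (hw0 ▸ Relation.ReflTransGen.refl)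
        · exact Or.inl ⟨hwT, hw0⟩
      · exact Or.inr (Relation.ReflTransGen.head hwc hct0)
  -- clusters of T at vertices of T are contained in L
  have hclusL : ∀ w ∈ Network.vertsOf T, N.clusterIn T w ⊆ L := by
    intro w hw x hx
    obtain ⟨z, hz, hzl⟩ := hx
    have hzT : z ∈ Network.vertsOf T := by
      rcases Relation.ReflTransGen.cases_tail hz with rfl | ⟨p, _, hpz⟩
      · exact hw
      · exact Or.inr ⟨(p, z), hpz, rfl⟩
    rw [hL]
    exact ⟨z, hzT, hzl⟩
  -- monotonicity of tree clusters
  have hmono : ∀ a b : V, Network.reachesIn T a b →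
      N.clusterIn T b ⊆ N.clusterIn T a := by
    rintro a b hab x ⟨z, hz, hzl⟩
    exact ⟨z, hab.trans hz, hzl⟩
  -- compatibility of tree clusters
  have htreecomp : ∀ w1 w2 : V,
      ClCompatible (N.clusterIn T w1) (N.clusterIn T w2) := by
    intro w1 w2
    by_cases hdisj : N.clusterIn T w1 ∩ N.clusterIn T w2 = ∅
    · exact Or.inl hdisj
    · obtain ⟨x, ⟨z1, h1, hl1⟩, ⟨z2, h2, hl2⟩⟩ :=
        Set.nonempty_iff_ne_empty.mpr hdisj
      have hz12 : z1 = z2 := by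
        obtain ⟨v, _, hun⟩ := huniq x
        rw [hun z1 hl1, hun z2 hl2]
      subst hz12
      rcases tree_comparable hTfin hindeg1 h1 h2 with h | h
      · exact Or.inr (Or.inr (hmono w1 w2 h))
      · exact Or.inr (Or.inl (hmono w2 w1 h))
  -- the key dichotomy for represented clusters meeting L
  have key : ∀ C0, N.Represents C0 → (C0 ∩ L).Nonempty →
      L ⊆ C0 ∨ ∃ w ∈ Network.vertsOf T, C0 = N.clusterIn T w := by
    rintro C0 ⟨E', hE', e, heE', hC0⟩ ⟨x, hxC, hxL⟩
    rw [hL] at hxL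
    obtain ⟨u, huT, hulab⟩ := hxL
    rw [← hC0] at hxC
    obtain ⟨ℓ, hreach, hllab⟩ := hxC
    have hlu : ℓ = u := by
      obtain ⟨v, _, hun⟩ := huniq x
      rw [hun ℓ hllab, hun u hulab]
    subst hlu
    rcases henter E' hE'.1 e.2 ℓ hreach huT with ⟨hw, hwne⟩ | ht0
    · right
      refine ⟨e.2, hw, ?_⟩
      rw [← hC0]
      ext y
      constructor
      · rintro ⟨z, hz, hzl⟩
        exact ⟨z, (hstay E' hE'.1 e.2 z hw hwne hz).2.2, hzl⟩
      · rintro ⟨z, hz, hzl⟩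
        exact ⟨z, reachesIn_mono (hTsubE' E' hE') hz, hzl⟩
    · left
      intro y hy
      rw [hL] at hy
      obtain ⟨u', hu'T, hu'lab⟩ := hy
      rw [← hC0]
      exact ⟨u', ht0.trans (reachesIn_mono (hTsubE' E' hE') (hreachT u' hu'T)),
        hu'lab⟩
  constructor
  · rintro ⟨C0, hrep, hne, hCdiff, hLdiff⟩
    rcases key C0 hrep hne with h | ⟨w, hw, rfl⟩
    · obtain ⟨y, hy1, hy2⟩ := hLdiff
      exact hy2 (h hy1)
    · obtain ⟨y, hy1, hy2⟩ := hCdiff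
      exact hy2 (hclusL w hw hy1)
  · rintro A1 ⟨C0, hrep0, rfl, hne0⟩ A2 ⟨C1, hrep1, rfl, hne1⟩
    rcases key C0 hrep0 hne0 with h0 | ⟨w0, hw0, rfl⟩
    · have : C0 ∩ L = L := Set.inter_eq_right.mpr h0
      rw [this]
      exact Or.inr (Or.inr Set.inter_subset_right)
    · rcases key C1 hrep1 hne1 with h1 | ⟨w1, hw1, rfl⟩
      · have : C1 ∩ L = L := Set.inter_eq_right.mpr h1
        rw [this]
        exact Or.inr (Or.inl Set.inter_subset_right)
      · rw [Set.inter_eq_left.mpr (hclusL w0 hw0),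
          Set.inter_eq_left.mpr (hclusL w1 hw1)]
        exact htreecomp w0 w1
end
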